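/- arXiv:2210.00430 — 6 statements merged into one kernel-verified Lean document; each statement's English description precedes it below -/
import Mathlib

section
/- With P = Wᵀ W + σ² I_q (which equals Λ_q and is invertible), the matrix (W P⁻¹ Wᵀ) Σ (W P⁻¹ Wᵀ)ᵀ equals U Λ′ Uᵀ, where Λ′ is the d×d diagonal matrix whose i-th diagonal entry is (λ_i − σ²)²/λ_i for 1 ≤ i ≤ q and 0 for q < i ≤ d. (This is the covariance of the encode–decode map of P-PCA generative adversarial examples, strategy 1.) -/
/-!
Since `Uᵀ U = 1`, the first `q` columns `U_q` of `U` are orthonormal and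
`U_qᵀ Σ U_q = Λ_q`. Hence `Wᵀ W = diag(λ_j − σ²)`, so `P = Λ_q`, and
`W P⁻¹ Wᵀ = U_q diag((λ_j − σ²)/λ_j) U_qᵀ`. Sandwiching `Σ` between two copies of this
matrix gives `U_q diag((λ_j − σ²)²/λ_j) U_qᵀ`, which is `U Λ′ Uᵀ` because `Λ′` vanishes off
the first `q` indices.
-/

open Matrix

namespace Matrix

variable {l m n R : Type*}

theorem transpose_submatrix_mul_mul_submatrix [Fintype l] [Semiring R] (U : Matrix l m R)
    (X : Matrix l l R) (e : n → m) :
    (U.submatrix id e)ᵀ * X * U.submatrix id e = (Uᵀ * X * U).submatrix e e := by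
  rw [submatrix_mul _ _ _ id _ Function.bijective_id,
    submatrix_mul _ _ _ id _ Function.bijective_id, submatrix_id_id, transpose_submatrix]

theorem transpose_submatrix_mul_submatrix_eq_one [Fintype m] [DecidableEq m] [DecidableEq n]
    [Semiring R] {U : Matrix m m R} (hU : Uᵀ * U = 1) {e : n → m} (he : Function.Injective e) :
    (U.submatrix id e)ᵀ * U.submatrix id e = 1 := by
  simpa [hU, submatrix_one _ he] using transpose_submatrix_mul_mul_submatrix U 1 e

theorem transpose_submatrix_mul_conj_diagonal [Fintype m] [DecidableEq m] [DecidableEq n]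
    [Semiring R] {U : Matrix m m R} (hU : Uᵀ * U = 1) (f : m → R) {e : n → m}
    (he : Function.Injective e) :
    (U.submatrix id e)ᵀ * (U * diagonal f * Uᵀ) * U.submatrix id e = diagonal (f ∘ e) := by
  rw [transpose_submatrix_mul_mul_submatrix, ← Matrix.mul_assoc, ← Matrix.mul_assoc, hU,
    Matrix.one_mul, Matrix.mul_assoc, hU, Matrix.mul_one, submatrix_diagonal _ _ he]

theorem inv_diagonal_of_ne_zero [Fintype n] [DecidableEq n] {K : Type*} [Field K] {v : n → K}
    (hv : ∀ i, v i ≠ 0) : (diagonal v)⁻¹ = diagonal v⁻¹ := by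
  refine inv_eq_right_inv ?_
  rw [diagonal_mul_diagonal, ← diagonal_one]
  exact congrArg diagonal (funext fun i => mul_inv_cancel₀ (hv i))

variable [CommSemiring R] [DecidableEq n]

theorem mul_diagonal_mul_transpose_eq_submatrix [Fintype m] [Fintype n] [DecidableEq m]
    (U : Matrix l m R) (f : m → R) {e : n → m} (he : Function.Injective e)
    (hf : ∀ i ∉ Set.range e, f i = 0) :
    U * diagonal f * Uᵀ = U.submatrix id e * diagonal (f ∘ e) * (U.submatrix id e)ᵀ := by
  ext i k
  simp only [mul_apply (M := _ * diagonal _), mul_diagonal, transpose_apply, submatrix_apply, id,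
    Function.comp_apply]
  exact (Fintype.sum_of_injective e he _ _ (fun a ha => by simp [hf a ha]) fun _ => rfl).symm

theorem mul_diagonal_mul_diagonal_mul_transpose [Fintype n] (V : Matrix l n R) (s p : n → R) :
    V * diagonal s * diagonal p * (V * diagonal s)ᵀ =
      V * diagonal (fun j => s j * p j * s j) * Vᵀ := by
  simp only [transpose_mul, diagonal_transpose, Matrix.mul_assoc, diagonal_mul_diagonal]
  simp only [← Matrix.mul_assoc, diagonal_mul_diagonal]

theorem transpose_mul_self_of_mul_diagonal [Fintype l] [Fintype n] {V : Matrix l n R}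
    (hV : Vᵀ * V = 1) (s : n → R) :
    (V * diagonal s)ᵀ * (V * diagonal s) = diagonal (fun j => s j * s j) := by
  rw [transpose_mul, diagonal_transpose, Matrix.mul_assoc, ← Matrix.mul_assoc Vᵀ, hV,
    Matrix.one_mul, diagonal_mul_diagonal]

theorem mul_diagonal_mul_transpose_conj [Fintype l] [Fintype n] {V : Matrix l n R}
    {X : Matrix l l R} {c : n → R} (hX : Vᵀ * X * V = diagonal c) (a : n → R) :
    V * diagonal a * Vᵀ * X * (V * diagonal a * Vᵀ)ᵀ =
      V * diagonal (fun j => a j * c j * a j) * Vᵀ := by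
  have h : V * diagonal a * Vᵀ * X * (V * diagonal a * Vᵀ)ᵀ =
      V * (diagonal a * (Vᵀ * X * V) * diagonal a) * Vᵀ := by
    simp only [transpose_mul, transpose_transpose, diagonal_transpose, Matrix.mul_assoc]
  rw [h, hX, diagonal_mul_diagonal, diagonal_mul_diagonal, Matrix.mul_assoc]

end Matrix

/-- Strategy 1 (encode–decode) covariance of P-PCA generative adversarial examples:
`P = Wᵀ W + σ² I_q` equals `Λ_q` and is invertible, and
`(W P⁻¹ Wᵀ) Σ (W P⁻¹ Wᵀ)ᵀ = U Λ' Uᵀ` with `Λ'` diagonal with entries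
`(λ_i − σ²)²/λ_i` for `i ≤ q` and `0` otherwise. -/
theorem strategy1_covariance
    (d q : ℕ) (hq1 : 1 ≤ q) (hqd : q ≤ d)
    (U : Matrix (Fin d) (Fin d) ℝ)
    (hU : U * Uᵀ = 1 ∧ Uᵀ * U = 1)
    (lam : Fin d → ℝ)
    (hlam_pos : ∀ i, 0 < lam i)
    (hlam_anti : ∀ i j : Fin d, i ≤ j → lam j ≤ lam i)
    (σ2 : ℝ)
    (hσ2_lt : σ2 < lam ⟨q - 1, by omega⟩)
    (Sig : Matrix (Fin d) (Fin d) ℝ)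
    (hSig : Sig = U * diagonal lam * Uᵀ)
    (Uq : Matrix (Fin d) (Fin q) ℝ)
    (hUq : ∀ i j, Uq i j = U i (Fin.castLE hqd j))
    (W : Matrix (Fin d) (Fin q) ℝ)
    (hW : W = Uq * diagonal (fun j : Fin q => Real.sqrt (lam (Fin.castLE hqd j) - σ2)))
    (P : Matrix (Fin q) (Fin q) ℝ)
    (hP : P = Wᵀ * W + σ2 • (1 : Matrix (Fin q) (Fin q) ℝ)) :
    P = diagonal (fun j : Fin q => lam (Fin.castLE hqd j)) ∧
    IsUnit P ∧
    (W * P⁻¹ * Wᵀ) * Sig * (W * P⁻¹ * Wᵀ)ᵀ =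
      U * diagonal (fun i : Fin d => if (i : ℕ) < q then (lam i - σ2) ^ 2 / lam i else 0) * Uᵀ := by
  obtain ⟨-, hUU⟩ := hU
  set e : Fin q → Fin d := Fin.castLE hqd
  have he : Function.Injective e := Fin.castLE_injective hqd
  obtain rfl : Uq = U.submatrix id e := Matrix.ext hUq
  have hσ2_lt_lam (j : Fin q) : σ2 < lam (e j) :=
    hσ2_lt.trans_le (hlam_anti _ _ (by rw [Fin.le_def]; simp [e]; omega))
  have hlam_ne (j : Fin q) : lam (e j) ≠ 0 := (hlam_pos _).ne'
  have hPdiag : P = diagonal (lam ∘ e) := by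
    rw [hP, hW,
      transpose_mul_self_of_mul_diagonal (transpose_submatrix_mul_submatrix_eq_one hUU he),
      smul_one_eq_diagonal, diagonal_add]
    congr 1 with j
    simp [Real.mul_self_sqrt (sub_pos.mpr (hσ2_lt_lam j)).le]
  have hvanish : ∀ i ∉ Set.range e,
      (if (i : ℕ) < q then (lam i - σ2) ^ 2 / lam i else 0) = 0 :=
    fun i hi => if_neg fun h => hi ⟨⟨i, h⟩, rfl⟩
  refine ⟨hPdiag, hPdiag ▸ isUnit_diagonal.mpr (Pi.isUnit_iff.mpr fun j => (hlam_ne j).isUnit),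
    ?_⟩
  rw [hPdiag, inv_diagonal_of_ne_zero (v := lam ∘ e) hlam_ne, hW,
    mul_diagonal_mul_diagonal_mul_transpose,
    mul_diagonal_mul_transpose_conj (hSig ▸ transpose_submatrix_mul_conj_diagonal hUU lam he),
    mul_diagonal_mul_transpose_eq_submatrix U _ he hvanish]
  refine congrArg (fun f => U.submatrix id e * diagonal f * (U.submatrix id e)ᵀ)
    (funext fun j => ?_)
  have hsqrt := Real.mul_self_sqrt (sub_pos.mpr (hσ2_lt_lam j)).le
  simp only [Function.comp_apply, Pi.inv_apply, e, Fin.val_castLE, j.is_lt, if_true]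
  rw [mul_right_comm _ _ (√_), hsqrt]
  field_simp
  ring
end

section
/- Let Σ be a positive definite d×d real matrix, W a d×q real matrix, μ, x′ ∈ ℝ^d, and L a real number such that L·I_q − Wᵀ Σ⁻¹ W is positive definite and L·Σ − W Wᵀ is invertible. Then the function Δz ↦ ℓ(x′ + W Δz; μ, Σ) − (L/2)·‖Δz‖² on ℝ^q (with ‖·‖ the Euclidean norm) attains its unique global maximum at Δz* = Wᵀ (L·Σ − W Wᵀ)⁻¹ (x′ − μ). -/
/-!
Substituting `x = x' + W Δz` makes the objective, up to a constant, the concave quadratic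
`(2 Δzᵀ b − Δzᵀ M Δz) / 2` with `M = L I_q − Wᵀ Σ⁻¹ W ≻ 0` and `b = Wᵀ Σ⁻¹ (x' − μ)`; completing
the square, its unique maximiser is the solution of `M Δz = b`. The push-through identity
`(L I_q − Wᵀ Σ⁻¹ W) Wᵀ = Wᵀ Σ⁻¹ (L Σ − W Wᵀ)` shows that `Δz*` solves this equation.
-/

open Matrix

/-- Gaussian negative log-likelihood
`ℓ(x; μ, Σ) = (d/2) log(2π) + (1/2) log det Σ + (1/2) (x − μ)ᵀ Σ⁻¹ (x − μ)`. -/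
noncomputable def negLogLik {d : ℕ} (Sig : Matrix (Fin d) (Fin d) ℝ)
    (mu x : Fin d → ℝ) : ℝ :=
  (d : ℝ) / 2 * Real.log (2 * Real.pi) + 1 / 2 * Real.log Sig.det +
    1 / 2 * ((x - mu) ⬝ᵥ (Sig⁻¹ *ᵥ (x - mu)))

namespace Matrix

variable {ι κ R : Type*} [Fintype ι] [Fintype κ]

section CommRing

variable [CommRing R]

lemma dotProduct_mulVec_comm_of_transpose_eq {A : Matrix ι ι R} (hA : Aᵀ = A) (x y : ι → R) :
    x ⬝ᵥ A *ᵥ y = y ⬝ᵥ A *ᵥ x := by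
  simpa only [hA] using dotProduct_transpose_mulVec A x y

lemma add_mulVec_dotProduct_mulVec_add_mulVec {A : Matrix ι ι R} (hA : Aᵀ = A)
    (W : Matrix ι κ R) (v : ι → R) (z : κ → R) :
    (v + W *ᵥ z) ⬝ᵥ A *ᵥ (v + W *ᵥ z) =
      v ⬝ᵥ A *ᵥ v + 2 * (z ⬝ᵥ (Wᵀ * A) *ᵥ v) + z ⬝ᵥ (Wᵀ * A * W) *ᵥ z := by
  have hcross (y : ι → R) : (W *ᵥ z) ⬝ᵥ y = z ⬝ᵥ Wᵀ *ᵥ y := by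
    rw [dotProduct_transpose_mulVec, dotProduct_comm]
  have hsymm := dotProduct_mulVec_comm_of_transpose_eq hA v (W *ᵥ z)
  simp only [← mulVec_mulVec, ← hcross, mulVec_add, dotProduct_add, add_dotProduct]
  rw [hsymm]
  ring

lemma smul_one_sub_mul_inv_mul_mul_inv_eq [DecidableEq ι] [DecidableEq κ] (L : R)
    {S : Matrix ι ι R} (hS : IsUnit S.det) (V : Matrix κ ι R) (W : Matrix ι κ R)
    (hSW : IsUnit (L • S - W * V).det) :
    (L • 1 - V * S⁻¹ * W) * (V * (L • S - W * V)⁻¹) = V * S⁻¹ := by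
  have hpush : (L • 1 - V * S⁻¹ * W) * V = V * S⁻¹ * (L • S - W * V) := by
    rw [Matrix.sub_mul, Matrix.mul_sub, Matrix.smul_mul, Matrix.one_mul, Matrix.mul_smul,
      Matrix.mul_assoc _ S⁻¹ S, nonsing_inv_mul S hS, Matrix.mul_one, Matrix.mul_assoc _ W]
  rw [← Matrix.mul_assoc, hpush, Matrix.mul_assoc, mul_nonsing_inv _ hSW, Matrix.mul_one]

end CommRing

lemma PosDef.two_mul_dotProduct_sub_dotProduct_mulVec_lt [CommRing R] [LinearOrder R]
    [IsStrictOrderedRing R] [StarRing R] [TrivialStar R]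
    {M : Matrix κ κ R} (hM : M.PosDef) {b zstar z : κ → R} (hb : M *ᵥ zstar = b)
    (hz : z ≠ zstar) :
    2 * (z ⬝ᵥ b) - z ⬝ᵥ M *ᵥ z < 2 * (zstar ⬝ᵥ b) - zstar ⬝ᵥ M *ᵥ zstar := by
  have hMt : Mᵀ = M := by
    simpa [conjTranspose_eq_transpose_of_trivial] using hM.isHermitian.eq
  have hpos : 0 < (z - zstar) ⬝ᵥ M *ᵥ (z - zstar) := by
    simpa using hM.dotProduct_mulVec_pos (sub_ne_zero.mpr hz)
  have hsymm := dotProduct_mulVec_comm_of_transpose_eq hMt z zstar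
  rw [← hb]
  simp only [mulVec_sub, dotProduct_sub, sub_dotProduct] at hpos
  linarith

end Matrix

lemma negLogLik_add_mulVec_sub_sum_sq {d q : ℕ} {Sig : Matrix (Fin d) (Fin d) ℝ}
    (hSig : Sigᵀ = Sig) (W : Matrix (Fin d) (Fin q) ℝ) (mu x : Fin d → ℝ) (L : ℝ)
    (z : Fin q → ℝ) :
    negLogLik Sig mu (x + W *ᵥ z) - L / 2 * ∑ i, z i ^ 2 =
      negLogLik Sig mu x +
        (2 * (z ⬝ᵥ (Wᵀ * Sig⁻¹) *ᵥ (x - mu)) - z ⬝ᵥ (L • 1 - Wᵀ * Sig⁻¹ * W) *ᵥ z) / 2 := by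
  have hSigInv : Sig⁻¹ᵀ = Sig⁻¹ := by rw [transpose_nonsing_inv, hSig]
  have hshift : x + W *ᵥ z - mu = (x - mu) + W *ᵥ z := by abel
  have hsq : ∑ i, z i ^ 2 = z ⬝ᵥ z := by simp only [dotProduct, sq]
  rw [negLogLik, negLogLik, hshift, add_mulVec_dotProduct_mulVec_add_mulVec hSigInv, hsq,
    sub_mulVec, smul_mulVec, one_mulVec, dotProduct_sub, dotProduct_smul, smul_eq_mul]
  ring

theorem optimal_generative_perturbation_general
    (d q : ℕ)
    (Sig : Matrix (Fin d) (Fin d) ℝ) (hSig : Sig.PosDef)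
    (W : Matrix (Fin d) (Fin q) ℝ) (mu x' : Fin d → ℝ) (L : ℝ)
    (hL : (L • (1 : Matrix (Fin q) (Fin q) ℝ) - Wᵀ * Sig⁻¹ * W).PosDef)
    (hInv : IsUnit (L • Sig - W * Wᵀ))
    (Δzstar : Fin q → ℝ)
    (hΔzstar : Δzstar = (Wᵀ * (L • Sig - W * Wᵀ)⁻¹) *ᵥ (x' - mu)) :
    ∀ Δz : Fin q → ℝ, Δz ≠ Δzstar →
      negLogLik Sig mu (x' + W *ᵥ Δz) - L / 2 * ∑ i, Δz i ^ 2 <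
        negLogLik Sig mu (x' + W *ᵥ Δzstar) - L / 2 * ∑ i, Δzstar i ^ 2 := by
  intro Δz hne
  have hSymm : Sigᵀ = Sig := by
    simpa [conjTranspose_eq_transpose_of_trivial] using hSig.isHermitian.eq
  have hstationary :
      (L • 1 - Wᵀ * Sig⁻¹ * W) *ᵥ Δzstar = (Wᵀ * Sig⁻¹) *ᵥ (x' - mu) := by
    rw [hΔzstar, mulVec_mulVec, smul_one_sub_mul_inv_mul_mul_inv_eq L hSig.det_pos.ne'.isUnit
      Wᵀ W ((isUnit_iff_isUnit_det _).mp hInv)]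
  rw [negLogLik_add_mulVec_sub_sum_sq hSymm, negLogLik_add_mulVec_sub_sum_sq hSymm]
  linarith [hL.two_mul_dotProduct_sub_dotProduct_mulVec_lt hstationary hne]

/-- Optimal on-manifold perturbation: if `L I_q − Wᵀ Σ⁻¹ W` is positive definite and
`L Σ − W Wᵀ` is invertible, then `Δz ↦ ℓ(x′ + W Δz; μ, Σ) − (L/2) ‖Δz‖²`
attains its unique global maximum at `Δz* = Wᵀ (L Σ − W Wᵀ)⁻¹ (x′ − μ)`. -/
theorem optimal_generative_perturbation
    (d q : ℕ) (hd : 1 ≤ d) (hq : 1 ≤ q)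
    (Sig : Matrix (Fin d) (Fin d) ℝ) (hSig : Sig.PosDef)
    (W : Matrix (Fin d) (Fin q) ℝ) (mu x' : Fin d → ℝ) (L : ℝ)
    (hL : (L • (1 : Matrix (Fin q) (Fin q) ℝ) - Wᵀ * Sig⁻¹ * W).PosDef)
    (hInv : IsUnit (L • Sig - W * Wᵀ))
    (Δzstar : Fin q → ℝ)
    (hΔzstar : Δzstar = (Wᵀ * (L • Sig - W * Wᵀ)⁻¹) *ᵥ (x' - mu)) :
    ∀ Δz : Fin q → ℝ, Δz ≠ Δzstar →
      negLogLik Sig mu (x' + W *ᵥ Δz) - L / 2 * ∑ i, Δz i ^ 2 <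
        negLogLik Sig mu (x' + W *ᵥ Δzstar) - L / 2 * ∑ i, Δzstar i ^ 2 :=
  optimal_generative_perturbation_general d q Sig hSig W mu x' L hL hInv Δzstar hΔzstar
end

section
/- Let Σ be a positive definite d×d real matrix, μ, x ∈ ℝ^d, and L a real number such that L·I_d − Σ⁻¹ is positive definite (so L·Σ − I_d is invertible). Then the function Δx ↦ ℓ(x + Δx; μ, Σ) − (L/2)·‖Δx‖² on ℝ^d (with ‖·‖ the Euclidean norm) attains its unique global maximum at Δx* = (L·Σ − I_d)⁻¹ (x − μ). -/
/-!
Writing `v = x - μ`, `A = Σ⁻¹` and `M = L I - A`, the objective is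
`ℓ(x; μ, Σ) + (A v)ᵀ Δx - ½ Δxᵀ M Δx`, a strictly concave quadratic since `M` is positive
definite. Completing the square around the solution `Δx*` of `M Δx* = A v` shows that it
falls short of its value at `Δx*` by exactly `½ (Δx - Δx*)ᵀ M (Δx - Δx*)`. Finally
`A (L Σ - I) = M`, so `Δx* = (L Σ - I)⁻¹ v` solves `M Δx* = A v`, and `L Σ - I = M Σ` is
invertible.
-/

open Matrix

namespace Matrix

variable {n R : Type*} [Fintype n]

section CommRing

variable [CommRing R] {A : Matrix n n R}

theorem IsSymm.dotProduct_mulVec_comm (hA : A.IsSymm) (x y : n → R) :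
    x ⬝ᵥ A *ᵥ y = y ⬝ᵥ A *ᵥ x := by
  rw [dotProduct_mulVec, ← mulVec_transpose, hA.eq, dotProduct_comm]

theorem IsSymm.add_dotProduct_mulVec_add (hA : A.IsSymm) (v y : n → R) :
    (v + y) ⬝ᵥ A *ᵥ (v + y) = v ⬝ᵥ A *ᵥ v + 2 * ((A *ᵥ v) ⬝ᵥ y) + y ⬝ᵥ A *ᵥ y := by
  simp only [mulVec_add, dotProduct_add, add_dotProduct]
  rw [hA.dotProduct_mulVec_comm v y, dotProduct_comm y]
  ring

theorem IsSymm.two_dotProduct_sub_dotProduct_mulVec {M : Matrix n n R} (hM : M.IsSymm)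
    {b s : n → R} (hs : M *ᵥ s = b) (y : n → R) :
    2 * (b ⬝ᵥ y) - y ⬝ᵥ M *ᵥ y =
      2 * (b ⬝ᵥ s) - s ⬝ᵥ M *ᵥ s - (y - s) ⬝ᵥ M *ᵥ (y - s) := by
  subst hs
  have hsplit := hM.add_dotProduct_mulVec_add s (y - s)
  rw [add_sub_cancel, dotProduct_sub] at hsplit
  rw [hsplit]
  ring

end CommRing

theorem PosDef.dotProduct_sub_half_dotProduct_mulVec_lt {M : Matrix n n ℝ} (hM : M.PosDef)
    {b s y : n → ℝ} (hs : M *ᵥ s = b) (hy : y ≠ s) :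
    b ⬝ᵥ y - y ⬝ᵥ M *ᵥ y / 2 < b ⬝ᵥ s - s ⬝ᵥ M *ᵥ s / 2 := by
  have hgap : 0 < (y - s) ⬝ᵥ M *ᵥ (y - s) := by
    simpa using hM.dotProduct_mulVec_pos (sub_ne_zero.mpr hy)
  have hsquare :=
    (isHermitian_iff_isSymm.mp hM.isHermitian).two_dotProduct_sub_dotProduct_mulVec hs y
  linarith

variable [DecidableEq n] [CommRing R] {S : Matrix n n R} (hS : IsUnit S.det) (c : R)
include hS

theorem smul_one_sub_inv_mul : (c • 1 - S⁻¹) * S = c • S - 1 := by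
  rw [sub_mul, smul_mul, one_mul, nonsing_inv_mul _ hS]

theorem inv_mul_smul_sub_one : S⁻¹ * (c • S - 1) = c • 1 - S⁻¹ := by
  rw [Matrix.mul_sub, Matrix.mul_smul, Matrix.mul_one, nonsing_inv_mul _ hS]

end Matrix

theorem negLogLik_add_sub_sum_sq {d : ℕ} {Sig : Matrix (Fin d) (Fin d) ℝ}
    (hSig : Sig.IsHermitian) (mu x Δx : Fin d → ℝ) (L : ℝ) :
    negLogLik Sig mu (x + Δx) - L / 2 * ∑ i, Δx i ^ 2 =
      negLogLik Sig mu x + ((Sig⁻¹ *ᵥ (x - mu)) ⬝ᵥ Δx -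
        Δx ⬝ᵥ (L • 1 - Sig⁻¹) *ᵥ Δx / 2) := by
  have hsymm : Sig⁻¹.IsSymm := isHermitian_iff_isSymm.mp hSig.inv
  have hsum : ∑ i, Δx i ^ 2 = Δx ⬝ᵥ Δx := by simp only [dotProduct, sq]
  have hshift : x + Δx - mu = (x - mu) + Δx := add_sub_right_comm x Δx mu
  rw [negLogLik, negLogLik, hshift, hsymm.add_dotProduct_mulVec_add, hsum,
    sub_mulVec, smul_mulVec, one_mulVec, dotProduct_sub, dotProduct_smul, smul_eq_mul]
  ring

theorem optimal_regular_perturbation_general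
    (d : ℕ)
    (Sig : Matrix (Fin d) (Fin d) ℝ) (hSig : Sig.PosDef)
    (mu x : Fin d → ℝ) (L : ℝ)
    (hL : (L • (1 : Matrix (Fin d) (Fin d) ℝ) - Sig⁻¹).PosDef)
    (Δxstar : Fin d → ℝ)
    (hΔxstar : Δxstar = (L • Sig - (1 : Matrix (Fin d) (Fin d) ℝ))⁻¹ *ᵥ (x - mu)) :
    IsUnit (L • Sig - (1 : Matrix (Fin d) (Fin d) ℝ)) ∧
    ∀ Δx : Fin d → ℝ, Δx ≠ Δxstar →
      negLogLik Sig mu (x + Δx) - L / 2 * ∑ i, Δx i ^ 2 <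
        negLogLik Sig mu (x + Δxstar) - L / 2 * ∑ i, Δxstar i ^ 2 := by
  have hSigDet : IsUnit Sig.det := (isUnit_iff_isUnit_det Sig).mp hSig.isUnit
  have hUnit : IsUnit (L • Sig - 1) := by
    rw [← smul_one_sub_inv_mul hSigDet]
    exact hL.isUnit.mul hSig.isUnit
  have hstationary : (L • 1 - Sig⁻¹) *ᵥ Δxstar = Sig⁻¹ *ᵥ (x - mu) := by
    rw [hΔxstar, ← inv_mul_smul_sub_one hSigDet, mulVec_mulVec, Matrix.mul_assoc,
      mul_nonsing_inv _ ((isUnit_iff_isUnit_det _).mp hUnit), Matrix.mul_one]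
  refine ⟨hUnit, fun Δx hne => ?_⟩
  rw [negLogLik_add_sub_sum_sq hSig.isHermitian, negLogLik_add_sub_sum_sq hSig.isHermitian]
  exact add_lt_add_right (hL.dotProduct_sub_half_dotProduct_mulVec_lt hstationary hne) _

/-- Optimal regular (full-space) perturbation: if `L I_d − Σ⁻¹` is positive definite,
then `L Σ − I_d` is invertible and `Δx ↦ ℓ(x + Δx; μ, Σ) − (L/2) ‖Δx‖²`
attains its unique global maximum at `Δx* = (L Σ − I_d)⁻¹ (x − μ)`. -/
theorem optimal_regular_perturbation
    (d : ℕ) (hd : 1 ≤ d)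
    (Sig : Matrix (Fin d) (Fin d) ℝ) (hSig : Sig.PosDef)
    (mu x : Fin d → ℝ) (L : ℝ)
    (hL : (L • (1 : Matrix (Fin d) (Fin d) ℝ) - Sig⁻¹).PosDef)
    (Δxstar : Fin d → ℝ)
    (hΔxstar : Δxstar = (L • Sig - (1 : Matrix (Fin d) (Fin d) ℝ))⁻¹ *ᵥ (x - mu)) :
    IsUnit (L • Sig - (1 : Matrix (Fin d) (Fin d) ℝ)) ∧
    ∀ Δx : Fin d → ℝ, Δx ≠ Δxstar →
      negLogLik Sig mu (x + Δx) - L / 2 * ∑ i, Δx i ^ 2 <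
        negLogLik Sig mu (x + Δxstar) - L / 2 * ∑ i, Δxstar i ^ 2 :=
  optimal_regular_perturbation_general d Sig hSig mu x L hL Δxstar hΔxstar
end

section
/- Let λ > 0 and L > 0 be real numbers. Then t* = (1/4)·[ 2λ + 4/L + 2λ·√(1 + 4/(λ L)) ] is the unique real number t > 1/L satisfying λ L² t = (L t − 1)², equivalently λ · (1 + 1/(L t − 1))² = t. (Fixed-point characterization of the optimal eigenvalues λ_i^{eat} of eigenspace adversarial training.) -/
/-! With `u = L t` and `a = λ L` the equation `λ L² t = (L t - 1)²` becomes the quadratic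
`u² - (2 + a) u + 1 = 0`. Its roots have product `1`, so at most one of them exceeds `1`, and
`L t*` is the larger root `1 + a/2 + (a/2) √(1 + 4/a)`. Dividing the equation by `t (L t - 1)²`
gives the fixed-point form. -/

theorem eq_of_one_lt_of_sq_sub_mul_add_one_eq_zero {b u v : ℝ} (hu : 1 < u) (hv : 1 < v)
    (hu0 : u ^ 2 - b * u + 1 = 0) (hv0 : v ^ 2 - b * v + 1 = 0) : u = v := by
  have hfactor : (u - v) * (u + v - b) = 0 := by linear_combination hu0 - hv0
  rcases mul_eq_zero.mp hfactor with huv | hsum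
  · linarith
  · -- Vieta: `u + v = b` forces `u v = 1`.
    have hprod : u * v = 1 := by linear_combination -hu0 + u * hsum
    nlinarith

theorem larger_root_sq_sub_mul_add_one_eq_zero {a : ℝ} (ha : 0 < a) :
    let u := 1 + a / 2 + a / 2 * √(1 + 4 / a)
    u ^ 2 - (2 + a) * u + 1 = 0 ∧ 1 < u := by
  have hs : √(1 + 4 / a) ^ 2 = 1 + 4 / a := Real.sq_sqrt (by positivity)
  refine ⟨?_, by nlinarith [Real.sqrt_nonneg (1 + 4 / a)]⟩
  have hs' : a * √(1 + 4 / a) ^ 2 = a + 4 := by rw [hs]; field_simp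
  linear_combination a / 4 * hs'

theorem mul_sq_mul_eq_sub_one_sq_iff (lam L t : ℝ) :
    lam * L ^ 2 * t = (L * t - 1) ^ 2 ↔ (L * t) ^ 2 - (2 + lam * L) * (L * t) + 1 = 0 := by
  constructor <;> intro h <;> linear_combination -h

theorem mul_sq_mul_eq_sub_one_sq_iff_fixedPoint {lam L t : ℝ} (ht : t ≠ 0)
    (hd : L * t - 1 ≠ 0) :
    lam * L ^ 2 * t = (L * t - 1) ^ 2 ↔ lam * (1 + 1 / (L * t - 1)) ^ 2 = t := by
  have hsum : 1 + 1 / (L * t - 1) = L * t / (L * t - 1) := by field_simp; ring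
  rw [hsum, div_pow, mul_div_assoc', div_eq_iff (pow_ne_zero 2 hd), ← mul_right_inj' ht]
  constructor <;> intro h <;> linear_combination h

/-- Fixed-point characterization of the optimal eigenvalues `λ_i^{eat}` of eigenspace
adversarial training: for `λ > 0`, `L > 0`,
`t* = (1/4)[2λ + 4/L + 2λ√(1 + 4/(λL))]` is the unique `t > 1/L` with
`λ L² t = (L t − 1)²`, equivalently `λ (1 + 1/(L t − 1))² = t`. -/
theorem eat_eigenvalue_fixed_point
    (lam L : ℝ) (hlam : 0 < lam) (hL : 0 < L)
    (tstar : ℝ)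
    (htstar : tstar =
      1 / 4 * (2 * lam + 4 / L + 2 * lam * Real.sqrt (1 + 4 / (lam * L)))) :
    (1 / L < tstar ∧ lam * L ^ 2 * tstar = (L * tstar - 1) ^ 2) ∧
    (∀ t : ℝ, 1 / L < t → lam * L ^ 2 * t = (L * t - 1) ^ 2 → t = tstar) ∧
    (∀ t : ℝ, 1 / L < t →
      (lam * L ^ 2 * t = (L * t - 1) ^ 2 ↔ lam * (1 + 1 / (L * t - 1)) ^ 2 = t)) := by
  have one_lt_iff : ∀ t, 1 / L < t ↔ 1 < L * t := fun t => by
    rw [div_lt_iff₀ hL, mul_comm]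
  have hLtstar : L * tstar = 1 + lam * L / 2 + lam * L / 2 * √(1 + 4 / (lam * L)) := by
    rw [htstar]; field_simp; ring
  obtain ⟨hroot, hone⟩ := larger_root_sq_sub_mul_add_one_eq_zero (mul_pos hlam hL)
  rw [← hLtstar] at hroot hone
  refine ⟨⟨(one_lt_iff _).2 hone, (mul_sq_mul_eq_sub_one_sq_iff _ _ _).2 hroot⟩, ?_, ?_⟩
  · intro t ht h
    have := eq_of_one_lt_of_sq_sub_mul_add_one_eq_zero ((one_lt_iff t).1 ht) hone
      ((mul_sq_mul_eq_sub_one_sq_iff _ _ _).1 h) hroot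
    exact mul_left_cancel₀ hL.ne' this
  · intro t ht
    have hLt := (one_lt_iff t).1 ht
    have ht0 : t ≠ 0 := by rintro rfl; simp only [mul_zero] at hLt; linarith
    exact mul_sq_mul_eq_sub_one_sq_iff_fixedPoint ht0 (by linarith)
end

section
/- Let L > 0 be a real number and for λ > 0 define λ^{eat}(λ) = (1/4)·[ 2λ + 4/L + 2λ·√(1 + 4/(λ L)) ]. Then for every λ > 0, λ^{eat}(λ)/λ = 1/2 + 1/(L λ) + √(1/(L λ) + 1/4), and the function λ ↦ λ^{eat}(λ)/λ is strictly decreasing on (0, ∞). (Eigenspace adversarial training amplifies small eigenvalues more than large ones.) -/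
/-! The ratio is `g (1 / (L λ))` with `g t = 1/2 + t + √(t + 1/4)` strictly increasing, while
`1 / (L λ)` strictly decreases in `λ > 0`. -/

open Set

lemma eat_ratio_eq {L lam : ℝ} (hL : L ≠ 0) (hlam : lam ≠ 0) :
    (1 / 4 * (2 * lam + 4 / L + 2 * lam * Real.sqrt (1 + 4 / (lam * L)))) / lam =
      1 / 2 + 1 / (L * lam) + Real.sqrt (1 / (L * lam) + 1 / 4) := by
  have hsqrt : Real.sqrt (1 / (L * lam) + 1 / 4) = Real.sqrt (1 + 4 / (lam * L)) / 2 := by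
    have hquarter : 1 / (L * lam) + 1 / 4 = (1 + 4 / (lam * L)) / 4 := by
      field_simp
      ring
    rw [hquarter, Real.sqrt_div' _ (by norm_num : (0 : ℝ) ≤ 4)]
    norm_num
  rw [hsqrt]
  field_simp
  ring

lemma strictMono_add_sqrt_add_quarter :
    StrictMono fun t : ℝ => 1 / 2 + t + Real.sqrt (t + 1 / 4) :=
  (strictMono_id.const_add (1 / 2)).add_monotone
    fun _ _ hst => Real.sqrt_le_sqrt (by linarith)

lemma strictAntiOn_one_div_mul {L : ℝ} (hL : 0 < L) :
    StrictAntiOn (fun lam : ℝ => 1 / (L * lam)) (Ioi 0) :=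
  fun _ ha _ _ hab => one_div_lt_one_div_of_lt (mul_pos hL ha) (mul_lt_mul_of_pos_left hab hL)

/-- Eigenspace adversarial training amplifies small eigenvalues more than large ones:
for `L > 0` and `λ^{eat}(λ) = (1/4)[2λ + 4/L + 2λ√(1 + 4/(λL))]`, one has
`λ^{eat}(λ)/λ = 1/2 + 1/(Lλ) + √(1/(Lλ) + 1/4)` for all `λ > 0`, and
`λ ↦ λ^{eat}(λ)/λ` is strictly decreasing on `(0, ∞)`. -/
theorem eat_amplification_ratio (L : ℝ) (hL : 0 < L) :
    (∀ lam : ℝ, 0 < lam →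
      (1 / 4 * (2 * lam + 4 / L + 2 * lam * Real.sqrt (1 + 4 / (lam * L)))) / lam =
        1 / 2 + 1 / (L * lam) + Real.sqrt (1 / (L * lam) + 1 / 4)) ∧
    StrictAntiOn
      (fun lam : ℝ =>
        (1 / 4 * (2 * lam + 4 / L + 2 * lam * Real.sqrt (1 + 4 / (lam * L)))) / lam)
      (Set.Ioi 0) := by
  refine ⟨fun lam hlam => eat_ratio_eq hL.ne' hlam.ne', ?_⟩
  exact (strictMono_add_sqrt_add_quarter.comp_strictAntiOn (strictAntiOn_one_div_mul hL)).congr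
    fun lam hlam => (eat_ratio_eq hL.ne' (ne_of_gt hlam)).symm
end

section
/- Let Σ be a positive definite d×d real matrix, W a d×q real matrix, and L a real number such that L·I_q − Wᵀ Σ⁻¹ W and L·Σ − W Wᵀ are invertible. Then M* = Wᵀ (L·Σ − W Wᵀ)⁻¹ is the unique q×d real matrix M satisfying the stationarity equation Wᵀ Σ⁻¹ + Wᵀ Σ⁻¹ W M − L·M = 0. (Optimal linear perturbation map in the modified min–max problem of generative adversarial training.) -/
open Matrix

/-! The stationarity equation says `(L • 1 - Wᵀ Σ⁻¹ W) M = Wᵀ Σ⁻¹`, so it has at most one solution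
because its coefficient matrix is invertible. The candidate solves it by the push-through identity
`(L • 1 - Wᵀ Σ⁻¹ W) Wᵀ = Wᵀ Σ⁻¹ (L Σ - W Wᵀ)`. -/

namespace Matrix

variable {m n l R : Type*} [Fintype m] [DecidableEq m] [Fintype n] [DecidableEq n] [CommRing R]

theorem smul_one_sub_mul_nonsing_inv_mul_mul (P : Matrix m m R) (hP : IsUnit P.det)
    (V : Matrix n m R) (W : Matrix m n R) (L : R) :
    (L • 1 - V * P⁻¹ * W) * V = V * P⁻¹ * (L • P - W * V) := by
  simp only [Matrix.sub_mul, Matrix.mul_sub, Matrix.smul_mul, Matrix.mul_smul, Matrix.one_mul,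
    Matrix.mul_assoc, nonsing_inv_mul P hP, Matrix.mul_one]

theorem add_mul_sub_smul_eq_zero_iff (C M : Matrix n l R) (K : Matrix n n R) (L : R) :
    C + K * M - L • M = 0 ↔ (L • 1 - K) * M = C := by
  rw [Matrix.sub_mul, Matrix.smul_mul, Matrix.one_mul, sub_eq_zero, sub_eq_iff_eq_add, eq_comm]

end Matrix

theorem optimal_perturbation_matrix_general
    (d q : ℕ)
    (Sig : Matrix (Fin d) (Fin d) ℝ) (hSig : Sig.PosDef)
    (W : Matrix (Fin d) (Fin q) ℝ) (L : ℝ)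
    (h1 : IsUnit (L • (1 : Matrix (Fin q) (Fin q) ℝ) - Wᵀ * Sig⁻¹ * W))
    (h2 : IsUnit (L • Sig - W * Wᵀ)) :
    (Wᵀ * Sig⁻¹ + Wᵀ * Sig⁻¹ * W * (Wᵀ * (L • Sig - W * Wᵀ)⁻¹) -
        L • (Wᵀ * (L • Sig - W * Wᵀ)⁻¹) = 0) ∧
    (∀ M : Matrix (Fin q) (Fin d) ℝ,
      Wᵀ * Sig⁻¹ + Wᵀ * Sig⁻¹ * W * M - L • M = 0 →
        M = Wᵀ * (L • Sig - W * Wᵀ)⁻¹) := by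
  rw [isUnit_iff_isUnit_det] at h1 h2
  have hsol : (L • 1 - Wᵀ * Sig⁻¹ * W) * (Wᵀ * (L • Sig - W * Wᵀ)⁻¹) = Wᵀ * Sig⁻¹ := by
    rw [← Matrix.mul_assoc, smul_one_sub_mul_nonsing_inv_mul_mul Sig
      ((isUnit_iff_isUnit_det Sig).mp hSig.isUnit), Matrix.mul_assoc, mul_nonsing_inv _ h2,
      Matrix.mul_one]
  refine ⟨(add_mul_sub_smul_eq_zero_iff _ _ _ L).mpr hsol, fun M hM => ?_⟩
  exact mul_right_injective_of_inv _ _ (nonsing_inv_mul _ h1)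
    (((add_mul_sub_smul_eq_zero_iff _ _ _ L).mp hM).trans hsol.symm)

/-- Optimal linear perturbation map in the modified min–max problem of generative
adversarial training: `M* = Wᵀ (L Σ − W Wᵀ)⁻¹` is the unique `q × d` matrix `M`
satisfying the stationarity equation `Wᵀ Σ⁻¹ + Wᵀ Σ⁻¹ W M − L M = 0`. -/
theorem optimal_perturbation_matrix
    (d q : ℕ) (hd : 1 ≤ d) (hq : 1 ≤ q)
    (Sig : Matrix (Fin d) (Fin d) ℝ) (hSig : Sig.PosDef)
    (W : Matrix (Fin d) (Fin q) ℝ) (L : ℝ)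
    (h1 : IsUnit (L • (1 : Matrix (Fin q) (Fin q) ℝ) - Wᵀ * Sig⁻¹ * W))
    (h2 : IsUnit (L • Sig - W * Wᵀ)) :
    (Wᵀ * Sig⁻¹ + Wᵀ * Sig⁻¹ * W * (Wᵀ * (L • Sig - W * Wᵀ)⁻¹) -
        L • (Wᵀ * (L • Sig - W * Wᵀ)⁻¹) = 0) ∧
    (∀ M : Matrix (Fin q) (Fin d) ℝ,
      Wᵀ * Sig⁻¹ + Wᵀ * Sig⁻¹ * W * M - L • M = 0 →
        M = Wᵀ * (L • Sig - W * Wᵀ)⁻¹) :=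
  optimal_perturbation_matrix_general d q Sig hSig W L h1 h2
end
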